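/- arXiv:2511.09699 — 3 statements merged into one kernel-verified Lean document; each statement's English description precedes it below -/
import Mathlib

section
/- Let $\mathfrak{g}$ be a finite-dimensional real Lie algebra with an $\mathrm{Ad}$-invariant norm for a connected Lie group $G$ (i.e., $|\mathrm{Ad}_g v| = |v|$ for all $g \in G$, $v \in \mathfrak{g}$). If $v \in \mathfrak{g}$ is nonzero and $\varphi \in \mathfrak{g}^*$ has dual norm $1$ with $\varphi(v) = |v|$, then $\varphi([v,x]) = 0$ for every $x \in \mathfrak{g}$. -/
open NormedSpace

/-- Let `g` be a finite-dimensional real Lie algebra (bracket given by the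
bilinear map `br` satisfying alternativity and the Jacobi identity) carrying an
`Ad`-invariant (Finsler) norm `n`, i.e. `n` is invariant under all the operators
`e^{s · ad x}` (this is `Ad`-invariance for a connected group `G`).  If `v ≠ 0` and
`φ` has dual norm `1` with `φ v = n v`, then `φ (br v x) = 0` for every `x`. -/
theorem adInvariant_norming_functional_annihilates_bracket
    {g : Type*} [NormedAddCommGroup g] [NormedSpace ℝ g] [FiniteDimensional ℝ g]
    (br : g →ₗ[ℝ] g →ₗ[ℝ] g)
    (halt : ∀ a : g, br a a = 0)
    (hjacobi : ∀ a b c : g, br a (br b c) + br b (br c a) + br c (br a b) = 0)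
    (n : g → ℝ)
    (hnonneg : ∀ x : g, 0 ≤ n x)
    (hadd : ∀ x y : g, n (x + y) ≤ n x + n y)
    (hhom : ∀ (c : ℝ) (x : g), 0 ≤ c → n (c • x) = c * n x)
    (hsymm : ∀ x : g, n (-x) = n x)
    (hdeg : ∀ x : g, n x = 0 ↔ x = 0)
    (hinv : ∀ (x v : g) (s : ℝ),
      n ((NormedSpace.exp (s • LinearMap.toContinuousLinearMap (br x))) v) = n v)
    (v : g) (hv : v ≠ 0)
    (φ : g →ₗ[ℝ] ℝ)
    (hφle : ∀ w : g, φ w ≤ n w)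
    (hφv : φ v = n v) :
    ∀ x : g, φ (br v x) = 0 := by
  intro x
  -- antisymmetry of the bracket
  have hanti : br v x = - br x v := by
    have h := halt (v + x)
    simp only [map_add, LinearMap.add_apply, halt v, halt x, zero_add, add_zero] at h
    exact eq_neg_of_add_eq_zero_left (by rw [add_comm]; exact h)
  set A : g →L[ℝ] g := LinearMap.toContinuousLinearMap (br x) with hA
  set φc : g →L[ℝ] ℝ := LinearMap.toContinuousLinearMap φ with hφc
  set f : ℝ → ℝ := fun s => φ (exp (s • A) v) with hf
  -- f has derivative φ (A v) at 0
  have h1 : HasDerivAt (fun s : ℝ => exp (s • A)) (exp ((0:ℝ) • A) * A) 0 :=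
    hasDerivAt_exp_smul_const A 0
  have h2 : HasDerivAt (fun s : ℝ => exp (s • A) v) (A v) 0 := by
    have := h1.clm_apply (hasDerivAt_const (0:ℝ) v)
    simpa [zero_smul, exp_zero] using this
  have h3 : HasDerivAt f (φ (A v)) 0 := by
    have := φc.hasFDerivAt.comp_hasDerivAt 0 h2
    exact this
  -- f has a global (hence local) max at 0
  have hf0 : f 0 = n v := by simp [hf, zero_smul, exp_zero, hφv]
  have hmax : IsLocalMax f 0 := by
    apply Filter.Eventually.of_forall
    intro s
    calc f s ≤ n (exp (s • A) v) := hφle _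
      _ = n v := hinv x v s
      _ = f 0 := hf0.symm
  have hzero : φ (A v) = 0 := hmax.hasDerivAt_eq_zero h3
  have : (A : g →L[ℝ] g) v = br x v := by simp [hA]
  rw [this] at hzero
  rw [hanti, map_neg, hzero, neg_zero]
end

section
/- Let $\mathfrak{g}$ be a finite-dimensional real Lie algebra with an $\mathrm{Ad}$-invariant norm for a connected Lie group $G$. If $v \in \mathfrak{g}$ is nonzero and $\varphi \in \mathfrak{g}^*$ has dual norm $1$ with $\varphi(v) = |v|$, then $\varphi([x,[x,v]]) \le 0$ for every $x \in \mathfrak{g}$. -/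
open NormedSpace

section Aux

variable {g : Type*} [NormedAddCommGroup g] [NormedSpace ℝ g] [FiniteDimensional ℝ g]

/-- Derivative of `s ↦ φ (exp (s • A) w)`. -/
lemma aux_hasDerivAt (φ : g →ₗ[ℝ] ℝ) (A : g →L[ℝ] g) (w : g) (s : ℝ) :
    HasDerivAt (fun t : ℝ => φ ((exp (t • A)) w))
      (φ ((exp (s • A)) (A w))) s := by
  have h1 : HasDerivAt (fun t : ℝ => exp (t • A)) (exp (s • A) * A) s :=
    hasDerivAt_exp_smul_const A s
  have h2 : HasDerivAt (fun t : ℝ => (exp (t • A)) w) ((exp (s • A) * A) w) s :=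
    ((ContinuousLinearMap.apply ℝ g w).hasFDerivAt.comp_hasDerivAt s h1)
  have h3 := ((LinearMap.toContinuousLinearMap φ).hasFDerivAt.comp_hasDerivAt s h2)
  exact h3

end Aux

/-- Let `g` be a finite-dimensional real Lie algebra (bracket given by the
bilinear map `br` satisfying alternativity and the Jacobi identity) carrying an
`Ad`-invariant (Finsler) norm `n`, i.e. `n` is invariant under all the operators
`e^{s · ad x}` (this is `Ad`-invariance for a connected group `G`).  If `v ≠ 0` and
`φ` has dual norm `1` with `φ v = n v`, then `φ (br x (br x v)) ≤ 0` for every `x`. -/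
theorem adInvariant_norming_functional_second_order_nonpos
    {g : Type*} [NormedAddCommGroup g] [NormedSpace ℝ g] [FiniteDimensional ℝ g]
    (br : g →ₗ[ℝ] g →ₗ[ℝ] g)
    (halt : ∀ a : g, br a a = 0)
    (hjacobi : ∀ a b c : g, br a (br b c) + br b (br c a) + br c (br a b) = 0)
    (n : g → ℝ)
    (hnonneg : ∀ x : g, 0 ≤ n x)
    (hadd : ∀ x y : g, n (x + y) ≤ n x + n y)
    (hhom : ∀ (c : ℝ) (x : g), 0 ≤ c → n (c • x) = c * n x)
    (hsymm : ∀ x : g, n (-x) = n x)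
    (hdeg : ∀ x : g, n x = 0 ↔ x = 0)
    (hinv : ∀ (x v : g) (s : ℝ),
      n ((NormedSpace.exp (s • LinearMap.toContinuousLinearMap (br x))) v) = n v)
    (v : g) (hv : v ≠ 0)
    (φ : g →ₗ[ℝ] ℝ)
    (hφle : ∀ w : g, φ w ≤ n w)
    (hφv : φ v = n v) :
    ∀ x : g, φ (br x (br x v)) ≤ 0 := by
  intro x
  set A : g →L[ℝ] g := LinearMap.toContinuousLinearMap (br x) with hA
  have hAapp : ∀ w : g, A w = br x w := fun w => rfl
  set f : ℝ → ℝ := fun s => φ ((exp (s • A)) v) with hf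
  have hderiv : ∀ s : ℝ, HasDerivAt f (φ ((exp (s • A)) (A v))) s :=
    fun s => aux_hasDerivAt φ A v s
  set f₁ : ℝ → ℝ := fun s => φ ((exp (s • A)) (A v)) with hf₁
  have hderiv₁ : ∀ s : ℝ, HasDerivAt f₁ (φ ((exp (s • A)) (A (A v)))) s :=
    fun s => aux_hasDerivAt φ A (A v) s
  have hexp0 : ∀ w : g, (exp ((0:ℝ) • A)) w = w := by
    intro w; simp [exp_zero]
  have hmax : ∀ s : ℝ, f s ≤ f 0 := by
    intro s
    calc f s ≤ n ((exp (s • A)) v) := hφle _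
      _ = n v := hinv x v s
      _ = φ v := hφv.symm
      _ = f 0 := by simp [hf, hexp0]
  have hd0 : φ (A v) = 0 := by
    have hlm : IsLocalMax f 0 := Filter.Eventually.of_forall hmax
    have := hlm.hasDerivAt_eq_zero (by simpa [hexp0] using hderiv 0)
    simpa using this
  by_contra hpos
  push_neg at hpos
  have hc : HasDerivAt f₁ (φ (A (A v))) 0 := by simpa [hexp0] using hderiv₁ 0
  have hf₁0 : f₁ 0 = 0 := by simpa [hf₁, hexp0] using hd0
  have hslope := hasDerivAt_iff_tendsto_slope.mp hc
  have hev : ∀ᶠ s in nhdsWithin (0:ℝ) (Set.Ioi 0), 0 < f₁ s := by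
    have h1 : Filter.Tendsto (slope f₁ 0) (nhdsWithin 0 (Set.Ioi 0))
        (nhds (φ (A (A v)))) :=
      hslope.mono_left (nhdsWithin_mono _ (fun s hs => ne_of_gt hs))
    have h2 : ∀ᶠ s in nhdsWithin (0:ℝ) (Set.Ioi 0), 0 < slope f₁ 0 s :=
      h1.eventually (eventually_gt_nhds (show (0:ℝ) < φ (A (A v)) from hpos))
    filter_upwards [h2, self_mem_nhdsWithin] with s hs hs0
    have hspos : (0:ℝ) < s := hs0
    have heq : slope f₁ 0 s = f₁ s / s := by
      simp [slope_def_field, hf₁0]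
    rw [heq] at hs
    have := mul_pos hs hspos
    rwa [div_mul_cancel₀ _ (ne_of_gt hspos)] at this
  obtain ⟨δ, hδ, hsub⟩ := mem_nhdsGT_iff_exists_Ioc_subset.mp hev
  have hδ0 : (0:ℝ) < δ := hδ
  have hmono : StrictMonoOn f (Set.Icc 0 δ) := by
    apply strictMonoOn_of_deriv_pos (convex_Icc 0 δ)
    · exact fun s _ => (hderiv s).continuousAt.continuousWithinAt
    · intro s hs
      rw [interior_Icc] at hs
      rw [(hderiv s).deriv]
      exact hsub ⟨hs.1, hs.2.le⟩
  have : f 0 < f δ :=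
    hmono ⟨le_refl 0, hδ0.le⟩ ⟨hδ0.le, le_refl δ⟩ hδ0
  exact absurd (hmax δ) (not_le.mpr this)
end

section
/- If the $\mathrm{Ad}$-invariant Finsler norm on $\mathfrak{g}$ is strictly convex, then $S(x,y) = 0$ implies $[x,y] = 0$, where $S(x,y) = -\frac{|y-x|}{4}\max_{\varphi \in N_{y-x}}\varphi([x,[x,y-x]])$. -/
theorem second_deriv_test {f f' f'' : ℝ → ℝ}
    (hd1 : ∀ s, HasDerivAt f (f' s) s)
    (hd2 : ∀ s, HasDerivAt f' (f'' s) s)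
    (hc : ContinuousAt f'' 0)
    (hmax : ∀ s, f s ≤ f 0) : f'' 0 ≤ 0 := by
  by_contra hpos
  push_neg at hpos
  have hev : ∀ᶠ s in nhds (0:ℝ), 0 < f'' s := hc.eventually (eventually_gt_nhds hpos)
  obtain ⟨δ, hδ, hball⟩ := Metric.eventually_nhds_iff.1 hev
  have h0 : f' 0 = 0 := by
    refine IsLocalMax.hasDerivAt_eq_zero ?_ (hd1 0)
    exact Filter.Eventually.of_forall hmax
  have hconv : Convex ℝ (Set.Icc (0:ℝ) (δ/2)) := convex_Icc _ _
  have hmono1 : StrictMonoOn f' (Set.Icc 0 (δ/2)) := by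
    refine strictMonoOn_of_deriv_pos hconv (fun s hs => (hd2 s).continuousAt.continuousWithinAt) ?_
    intro s hs
    rw [interior_Icc] at hs
    rw [(hd2 s).deriv]
    refine hball ?_
    simp only [Real.dist_eq, sub_zero]
    rw [abs_of_pos hs.1]
    linarith [hs.2]
  have hmono2 : StrictMonoOn f (Set.Icc 0 (δ/2)) := by
    refine strictMonoOn_of_deriv_pos hconv (fun s hs => (hd1 s).continuousAt.continuousWithinAt) ?_
    intro s hs
    rw [interior_Icc] at hs
    rw [(hd1 s).deriv]
    have := hmono1 (Set.left_mem_Icc.2 (by linarith)) (Set.mem_Icc.2 ⟨hs.1.le, hs.2.le⟩) hs.1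
    linarith [this, h0]
  have : f 0 < f (δ/2) :=
    hmono2 (Set.left_mem_Icc.2 (by linarith)) (Set.mem_Icc.2 ⟨by linarith, le_rfl⟩) (by linarith)
  linarith [hmax (δ/2)]



theorem n_sum_le' {g : Type*} [AddCommGroup g] {ι : Type*} (n : g → ℝ)
    (hadd : ∀ x y : g, n (x + y) ≤ n x + n y) (h0 : n 0 = 0)
    (s : Finset ι) (f : ι → g) : n (∑ i ∈ s, f i) ≤ ∑ i ∈ s, n (f i) := by
  classical
  induction s using Finset.cons_induction with
  | empty => simp [h0]
  | cons a s ha ih =>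
    rw [Finset.sum_cons, Finset.sum_cons]
    exact (hadd _ _).trans (by linarith)

theorem n_zero' {g : Type*} [AddCommGroup g] [Module ℝ g] (n : g → ℝ)
    (hhom : ∀ (c : ℝ) (x : g), 0 ≤ c → n (c • x) = c * n x) : n 0 = 0 := by
  have := hhom 0 0 le_rfl
  simpa using this

theorem n_smul_le {g : Type*} [AddCommGroup g] [Module ℝ g] (n : g → ℝ)
    (hhom : ∀ (c : ℝ) (x : g), 0 ≤ c → n (c • x) = c * n x) (c : ℝ) (e : g) :
    n (c • e) ≤ |c| * (max (n e) (n (-e))) := by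
  rcases le_or_gt 0 c with h | h
  · rw [hhom c e h, abs_of_nonneg h]
    have : 0 ≤ c := h
    nlinarith [le_max_left (n e) (n (-e))]
  · have : c • e = (-c) • (-e) := by simp
    rw [this, hhom (-c) (-e) (by linarith), abs_of_neg h]
    nlinarith [le_max_right (n e) (n (-e))]

theorem n_le_const_norm {g : Type*} [NormedAddCommGroup g] [NormedSpace ℝ g]
    [FiniteDimensional ℝ g] (n : g → ℝ)
    (hnonneg : ∀ x : g, 0 ≤ n x)
    (hadd : ∀ x y : g, n (x + y) ≤ n x + n y)
    (hhom : ∀ (c : ℝ) (x : g), 0 ≤ c → n (c • x) = c * n x) :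
    ∃ C : ℝ, 0 ≤ C ∧ ∀ z : g, n z ≤ C * ‖z‖ := by
  classical
  set b := Module.finBasis ℝ g with hb
  set d := Module.finrank ℝ g
  set K : Fin d → ℝ := fun i => ‖LinearMap.toContinuousLinearMap (b.coord i)‖
  set M : Fin d → ℝ := fun i => max (n (b i)) (n (-(b i)))
  refine ⟨∑ i, M i * K i, ?_, ?_⟩
  · refine Finset.sum_nonneg fun i _ => mul_nonneg ?_ (norm_nonneg _)
    exact le_trans (hnonneg (b i)) (le_max_left _ _)
  · intro z
    have hrepr : (∑ i, b.repr z i • b i) = z := b.sum_repr z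
    calc n z = n (∑ i, b.repr z i • b i) := by rw [hrepr]
    _ ≤ ∑ i, n (b.repr z i • b i) := n_sum_le' n hadd (n_zero' n hhom) _ _
    _ ≤ ∑ i, (M i * K i) * ‖z‖ := by
        refine Finset.sum_le_sum fun i _ => ?_
        have h1 := n_smul_le n hhom (b.repr z i) (b i)
        have h2 : |b.repr z i| ≤ K i * ‖z‖ := by
          have := (LinearMap.toContinuousLinearMap (b.coord i)).le_opNorm z
          simpa [Real.norm_eq_abs] using this
        have hM : 0 ≤ M i := le_trans (hnonneg (b i)) (le_max_left _ _)
        calc n (b.repr z i • b i) ≤ |b.repr z i| * M i := h1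
        _ ≤ (K i * ‖z‖) * M i := by
            exact mul_le_mul_of_nonneg_right h2 hM
        _ = (M i * K i) * ‖z‖ := by ring
    _ = (∑ i, M i * K i) * ‖z‖ := by rw [Finset.sum_mul]

theorem n_continuous {g : Type*} [NormedAddCommGroup g] [NormedSpace ℝ g]
    (n : g → ℝ) {C : ℝ} (hC : 0 ≤ C)
    (hadd : ∀ x y : g, n (x + y) ≤ n x + n y)
    (hbound : ∀ z : g, n z ≤ C * ‖z‖) : Continuous n := by
  have : LipschitzWith (Real.toNNReal C) n := by
    refine LipschitzWith.of_dist_le_mul fun a b => ?_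
    rw [Real.dist_eq, Real.coe_toNNReal C hC, dist_eq_norm]
    rw [abs_sub_le_iff]
    constructor
    · have h1 : n a ≤ n b + n (a - b) := by
        have := hadd b (a - b); simpa using this
      linarith [hbound (a - b)]
    · have h1 : n b ≤ n a + n (b - a) := by
        have := hadd a (b - a); simpa using this
      have := hbound (b - a)
      rw [norm_sub_rev] at this
      linarith
  exact this.continuous


open NormedSpace in
theorem expCurve_hasDerivAt {g : Type*} [NormedAddCommGroup g] [NormedSpace ℝ g]
    [CompleteSpace g] (A : g →L[ℝ] g) (z : g) (s : ℝ) :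
    HasDerivAt (fun t : ℝ => NormedSpace.exp (t • A) z)
      (A (NormedSpace.exp (s • A) z)) s := by
  have h1 := hasDerivAt_exp_smul_const' (𝕂 := ℝ) A s
  have h2 := h1.clm_apply (hasDerivAt_const s z)
  simpa using h2

set_option maxHeartbeats 2000000 in
open MeasureTheory in
theorem exists_invariant_form {g : Type*} [NormedAddCommGroup g] [NormedSpace ℝ g]
    [FiniteDimensional ℝ g] [Nontrivial g]
    (br : g →ₗ[ℝ] g →ₗ[ℝ] g) (n : g → ℝ)
    (hnonneg : ∀ x : g, 0 ≤ n x)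
    (hadd : ∀ x y : g, n (x + y) ≤ n x + n y)
    (hhom : ∀ (c : ℝ) (x : g), 0 ≤ c → n (c • x) = c * n x)
    (hdeg : ∀ x : g, n x = 0 ↔ x = 0)
    (hinv : ∀ (x v : g) (s : ℝ),
      n ((NormedSpace.exp (s • LinearMap.toContinuousLinearMap (br x))) v) = n v)
    (hCb : ∃ C : ℝ, 0 ≤ C ∧ ∀ z : g, n z ≤ C * ‖z‖)
    (hcont : Continuous n) :
    ∃ Φ : g →ₗ[ℝ] g →ₗ[ℝ] ℝ,
      (∀ a b : g, Φ a b = Φ b a) ∧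
      (∀ a : g, a ≠ 0 → 0 < Φ a a) ∧
      (∀ w a b : g, Φ (br w a) b + Φ a (br w b) = 0) ∧
      (∀ ψ : g →ₗ[ℝ] ℝ, ∃ u : g, Φ u = ψ) := by
  classical
  obtain ⟨C, hC0, hCle⟩ := hCb
  borelize g
  -- the convex body
  set B : Set g := {z | n z ≤ 1 ∧ n (-z) ≤ 1} with hBdef
  have hBclosed : IsClosed B := by
    have h1 : IsClosed {z : g | n z ≤ 1} := isClosed_le hcont continuous_const
    have h2 : IsClosed {z : g | n (-z) ≤ 1} :=
      isClosed_le (hcont.comp continuous_neg) continuous_const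
    exact h1.inter h2
  have hball : Metric.closedBall (0 : g) (C + 1)⁻¹ ⊆ B := by
    intro z hz
    rw [Metric.mem_closedBall, dist_zero_right] at hz
    have hz' : C * ‖z‖ ≤ 1 := by
      calc C * ‖z‖ ≤ C * (C+1)⁻¹ := by
            exact mul_le_mul_of_nonneg_left hz hC0
      _ ≤ 1 := by
            rw [mul_inv_le_iff₀ (by linarith : (0:ℝ) < C + 1)]
            linarith
    constructor
    · exact le_trans (hCle z) hz'
    · refine le_trans (hCle (-z)) ?_
      rwa [norm_neg]
  -- B bounded
  obtain ⟨z₀, hz₀mem, hz₀min⟩ :=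
    (isCompact_sphere (0:g) 1).exists_isMinOn
      (NormedSpace.sphere_nonempty.2 zero_le_one)
      ((hcont.add (hcont.comp continuous_neg)).continuousOn)
  have hz₀ne : z₀ ≠ 0 := by
    intro h
    have := mem_sphere_zero_iff_norm.1 hz₀mem
    rw [h] at this; simp at this
  set m : ℝ := n z₀ + n (-z₀) with hm
  have hmpos : 0 < m := by
    rcases lt_or_eq_of_le (add_nonneg (hnonneg z₀) (hnonneg (-z₀))) with h | h
    · exact h
    · exfalso
      have h1 : n z₀ = 0 := le_antisymm (by linarith [hnonneg (-z₀)]) (hnonneg z₀)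
      exact hz₀ne ((hdeg z₀).1 h1)
  have hBsub : B ⊆ Metric.closedBall (0:g) (2 / m) := by
    intro z hz
    rw [Metric.mem_closedBall, dist_zero_right]
    rcases eq_or_ne z 0 with rfl | hzne
    · simp; positivity
    · have hnz : 0 < ‖z‖ := norm_pos_iff.2 hzne
      have hw : (‖z‖⁻¹ • z) ∈ Metric.sphere (0:g) 1 := by
        rw [mem_sphere_zero_iff_norm, norm_smul, norm_inv, norm_norm]
        field_simp
      have hmin := hz₀min hw
      have hkey : m * ‖z‖ ≤ 2 := by
        have h1 : n z = ‖z‖ * n (‖z‖⁻¹ • z) := by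
          rw [← hhom ‖z‖ (‖z‖⁻¹ • z) (norm_nonneg z), smul_smul]
          field_simp
          rw [one_smul]
        have h2 : n (-z) = ‖z‖ * n (-(‖z‖⁻¹ • z)) := by
          rw [← hhom ‖z‖ (-(‖z‖⁻¹ • z)) (norm_nonneg z), smul_neg, smul_smul]
          field_simp
          rw [one_smul]
        have hmin' : m ≤ n (‖z‖⁻¹ • z) + n (-(‖z‖⁻¹ • z)) := hmin
        have := hz.1; have := hz.2
        nlinarith [hnz]
      rw [le_div_iff₀ hmpos]
      nlinarith [hkey]
  have hBcompact : IsCompact B :=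
    (isCompact_closedBall (0:g) (2/m)).of_isClosed_subset hBclosed hBsub
  have hBmeas : MeasurableSet B := hBclosed.measurableSet
  set μ : Measure g := (Module.finBasis ℝ g).addHaar with hμ
  have hμBpos : 0 < μ B :=
    lt_of_lt_of_le (Metric.measure_closedBall_pos μ 0 (by positivity)) (measure_mono hball)
  have hμBfin : μ B < ⊤ := hBcompact.measure_lt_top
  -- one-parameter groups of isometries
  set A : g → (g →L[ℝ] g) := fun w => LinearMap.toContinuousLinearMap (br w) with hA
  set T : g → ℝ → (g →L[ℝ] g) := fun w s => NormedSpace.exp (s • A w) with hT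
  have hTmul : ∀ (w : g) (s t : ℝ), T w s * T w t = T w (s + t) := by
    intro w s t
    have hc : Commute (s • A w) (t • A w) := by
      unfold Commute SemiconjBy
      ext z
      simp [ContinuousLinearMap.mul_apply, _root_.map_smul, smul_comm s t]
    letI : NormedAlgebra ℚ (g →L[ℝ] g) := NormedAlgebra.restrictScalars ℚ ℝ _
    have := (NormedSpace.exp_add_of_commute hc).symm
    simpa [hT, add_smul] using this
  have hT0 : ∀ w : g, T w 0 = 1 := by
    intro w; simp [hT, NormedSpace.exp_zero]
  have hTinvapp : ∀ (w : g) (s : ℝ) (z : g), T w s (T w (-s) z) = z := by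
    intro w s z
    have h := hTmul w s (-s)
    rw [add_neg_cancel, hT0] at h
    have := congrArg (fun f : g →L[ℝ] g => f z) h
    simpa [ContinuousLinearMap.mul_apply] using this
  have hTn : ∀ (w : g) (s : ℝ) (z : g), n (T w s z) = n z := fun w s z => hinv w z s
  have hTmem : ∀ (w : g) (s : ℝ) (z : g), z ∈ B → T w s z ∈ B := by
    intro w s z hz
    refine ⟨by rw [hTn]; exact hz.1, ?_⟩
    rw [← map_neg, hTn]
    exact hz.2
  have hTB : ∀ (w : g) (s : ℝ), (fun z => T w s z) '' B = B := by
    intro w s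
    apply Set.Subset.antisymm
    · rintro _ ⟨z, hz, rfl⟩
      exact hTmem w s z hz
    · intro z hz
      exact ⟨T w (-s) z, hTmem w (-s) z hz, hTinvapp w s z⟩
  have hμBne : (μ B).toReal ≠ 0 := ne_of_gt (ENNReal.toReal_pos (ne_of_gt hμBpos) (ne_of_lt hμBfin))
  have hdetT : ∀ (w : g) (s : ℝ),
      |LinearMap.det ((T w s : g →L[ℝ] g) : g →ₗ[ℝ] g)| = 1 := by
    intro w s
    have himg := Measure.addHaar_image_linearMap μ ((T w s : g →L[ℝ] g) : g →ₗ[ℝ] g) B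
    rw [ContinuousLinearMap.coe_coe] at himg
    rw [hTB w s] at himg
    have h2 := congrArg ENNReal.toReal himg
    rw [ENNReal.toReal_mul, ENNReal.toReal_ofReal (abs_nonneg _)] at h2
    have := mul_right_cancel₀ hμBne (h2.symm.trans (one_mul ((μ B).toReal)).symm)
    linarith [this]
  have hdetT0 : ∀ (w : g) (s : ℝ),
      LinearMap.det ((T w s : g →L[ℝ] g) : g →ₗ[ℝ] g) ≠ 0 := by
    intro w s h
    have := hdetT w s
    rw [h] at this; simp at this
  have hMP : ∀ (w : g) (s : ℝ), MeasurePreserving (fun z => T w s z) μ μ := by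
    intro w s
    refine ⟨(T w s).continuous.measurable, ?_⟩
    have h := Measure.map_linearMap_addHaar_eq_smul_addHaar μ (hdetT0 w s)
    rw [abs_inv, hdetT w s] at h
    simpa using h
  have hMEmb : ∀ (w : g) (s : ℝ), MeasurableEmbedding (fun z => T w s z) := by
    intro w s
    let e : g ≃ₗ[ℝ] g := LinearEquiv.ofLinear
      ((T w s : g →L[ℝ] g) : g →ₗ[ℝ] g) ((T w (-s) : g →L[ℝ] g) : g →ₗ[ℝ] g)
      (by ext z; simpa using hTinvapp w s z)
      (by ext z; have h := hTinvapp w (-s) z; rw [neg_neg] at h; simpa using h)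
    have hme : MeasurableEmbedding (⇑(e.toContinuousLinearEquiv.toHomeomorph)) :=
      e.toContinuousLinearEquiv.toHomeomorph.measurableEmbedding
    exact hme
  -- the covariance operator
  have φcont : ∀ φ : Module.Dual ℝ g, Continuous φ := fun φ => φ.continuous_of_finiteDimensional
  have hIntg : ∀ F : g → g, Continuous F → IntegrableOn F B μ := fun F hF =>
    (hF.continuousOn).integrableOn_compact hBcompact
  have hIntr : ∀ F : g → ℝ, Continuous F → IntegrableOn F B μ := fun F hF =>
    (hF.continuousOn).integrableOn_compact hBcompact
  have hIntφ : ∀ φ : Module.Dual ℝ g, IntegrableOn (fun z => φ z • z) B μ := fun φ =>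
    hIntg _ (((φcont φ).smul continuous_id))
  set Cfun : Module.Dual ℝ g → g := fun φ => ∫ z in B, φ z • z ∂μ with hCfun
  have hCadd : ∀ φ ψ : Module.Dual ℝ g, Cfun (φ + ψ) = Cfun φ + Cfun ψ := by
    intro φ ψ
    have h : (fun z => (φ + ψ) z • z) = fun z => φ z • z + ψ z • z := by
      funext z; simp [add_smul]
    rw [hCfun]
    simp only [h]
    exact integral_add (hIntφ φ) (hIntφ ψ)
  have hCsmul : ∀ (c : ℝ) (φ : Module.Dual ℝ g), Cfun (c • φ) = c • Cfun φ := by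
    intro c φ
    have h : (fun z => (c • φ) z • z) = fun z => c • (φ z • z) := by
      funext z; simp [mul_smul]
    rw [hCfun]
    simp only [h]
    exact integral_smul c _
  set Cop : Module.Dual ℝ g →ₗ[ℝ] g :=
    { toFun := Cfun, map_add' := hCadd, map_smul' := hCsmul } with hCop
  have hpair : ∀ φ ψ : Module.Dual ℝ g, ψ (Cfun φ) = ∫ z in B, φ z * ψ z ∂μ := by
    intro φ ψ
    have h := (LinearMap.toContinuousLinearMap ψ).integral_comp_comm (hIntφ φ)
    have h2 : ∀ z : g, (LinearMap.toContinuousLinearMap ψ) (φ z • z) = φ z * ψ z := by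
      intro z; simp [smul_eq_mul]
    simp only [h2] at h
    show ψ (∫ z in B, φ z • z ∂μ) = ∫ z in B, φ z * ψ z ∂μ
    exact h.symm
  have hCinvar : ∀ (w : g) (s : ℝ) (φ : Module.Dual ℝ g),
      Cfun (φ ∘ₗ ((T w s : g →L[ℝ] g) : g →ₗ[ℝ] g)) = T w (-s) (Cfun φ) := by
    intro w s φ
    have himg := (hMP w (-s)).setIntegral_image_emb (hMEmb w (-s))
      (fun z => φ (T w s z) • z) B
    rw [hTB w (-s)] at himg
    have hsimp : (fun z => φ (T w s (T w (-s) z)) • T w (-s) z)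
        = fun z => φ z • T w (-s) z := by
      funext z; rw [hTinvapp w s z]
    have himg2 : (∫ z in B, φ (T w s z) • z ∂μ) = ∫ z in B, φ z • T w (-s) z ∂μ := by
      rw [himg]
      try simp only [hTinvapp]
    have hcomm := (T w (-s)).integral_comp_comm (hIntφ φ)
    have h3 : ∀ z : g, (T w (-s)) (φ z • z) = φ z • (T w (-s) z) := by
      intro z; simp
    simp only [h3] at hcomm
    calc Cfun (φ ∘ₗ ((T w s : g →L[ℝ] g) : g →ₗ[ℝ] g))
        = ∫ z in B, φ (T w s z) • z ∂μ := rfl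
    _ = ∫ z in B, φ z • T w (-s) z ∂μ := himg2
    _ = T w (-s) (Cfun φ) := hcomm
  -- positivity
  have hposint : ∀ φ : Module.Dual ℝ g, φ ≠ 0 → 0 < ∫ z in B, φ z * φ z ∂μ := by
    intro φ hφ
    obtain ⟨z₁, hz₁⟩ : ∃ z₁ : g, φ z₁ ≠ 0 := by
      by_contra h
      push_neg at h
      exact hφ (LinearMap.ext fun z => h z)
    have hz₁ne : z₁ ≠ 0 := by rintro rfl; simp at hz₁
    set ε : ℝ := (C + 1)⁻¹ with hε
    have hεpos : 0 < ε := by positivity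
    set z' : g := (ε / 2 / ‖z₁‖) • z₁ with hz'
    have hnz₁ : (0:ℝ) < ‖z₁‖ := norm_pos_iff.2 hz₁ne
    have hz'norm : ‖z'‖ = ε / 2 := by
      rw [hz', norm_smul, Real.norm_eq_abs, abs_of_pos (by positivity)]
      field_simp
    have hφz' : φ z' ≠ 0 := by
      rw [hz', _root_.map_smul]
      simp only [smul_eq_mul]
      exact mul_ne_zero (ne_of_gt (by positivity)) hz₁
    set c : ℝ := (φ z') ^ 2 / 2 with hcdef
    have hcpos : 0 < c := by positivity
    have hopen : IsOpen {z : g | c < φ z * φ z} :=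
      isOpen_lt continuous_const ((φcont φ).mul (φcont φ))
    obtain ⟨r, hrpos, hballsub⟩ := Metric.isOpen_iff.1 hopen z' (by
      simp only [Set.mem_setOf_eq, hcdef]
      nlinarith [sq_nonneg (φ z')])
    set r' : ℝ := min r (ε / 2) with hr'
    have hr'pos : 0 < r' := lt_min hrpos (by positivity)
    have hUB : Metric.ball z' r' ⊆ B := by
      intro zz hzz
      apply hball
      rw [Metric.mem_closedBall, dist_zero_right]
      have h1 : dist zz z' < r' := hzz
      have h2 : ‖zz‖ ≤ ‖zz - z'‖ + ‖z'‖ := by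
        have := norm_add_le (zz - z') z'; simpa using this
      rw [dist_eq_norm] at h1
      have : r' ≤ ε / 2 := min_le_right _ _
      rw [hz'norm] at h2
      linarith
    have hUc : ∀ zz ∈ Metric.ball z' r', c ≤ φ zz * φ zz := by
      intro zz hzz
      have : zz ∈ Metric.ball z' r := Metric.ball_subset_ball (min_le_left _ _) hzz
      exact (hballsub this).le
    have hμU : 0 < μ (Metric.ball z' r') := Metric.measure_ball_pos μ z' hr'pos
    have hμUfin : μ (Metric.ball z' r') ≠ ⊤ := measure_ball_lt_top.ne
    have h1 : ∫ z in Metric.ball z' r', φ z * φ z ∂μ ≤ ∫ z in B, φ z * φ z ∂μ := by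
      refine setIntegral_mono_set (hIntr _ ((φcont φ).mul (φcont φ))) ?_ ?_
      · filter_upwards with z using mul_self_nonneg (φ z)
      · exact HasSubset.Subset.eventuallyLE hUB
    have h2 : c * (μ (Metric.ball z' r')).toReal ≤ ∫ z in Metric.ball z' r', φ z * φ z ∂μ := by
      refine setIntegral_ge_of_const_le_real measurableSet_ball hμUfin hUc ?_
      exact (hIntr _ ((φcont φ).mul (φcont φ))).mono_set hUB
    have h3 : 0 < c * (μ (Metric.ball z' r')).toReal :=
      mul_pos hcpos (ENNReal.toReal_pos (ne_of_gt hμU) hμUfin)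
    linarith
  have hCinj : Function.Injective Cop := by
    rw [← LinearMap.ker_eq_bot, LinearMap.ker_eq_bot']
    intro φ hφ0
    by_contra hφ
    have h := hposint φ hφ
    have : φ (Cfun φ) = 0 := by
      have : Cfun φ = 0 := hφ0
      rw [this, map_zero]
    rw [hpair φ φ] at this
    linarith
  -- the equivalence and the form
  have hsurj : Function.Surjective Cop :=
    (LinearMap.injective_iff_surjective_of_finrank_eq_finrank Subspace.dual_finrank_eq).1 hCinj
  set Ceq : Module.Dual ℝ g ≃ₗ[ℝ] g := LinearEquiv.ofBijective Cop ⟨hCinj, hsurj⟩ with hCeqdef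
  set Φ : g →ₗ[ℝ] g →ₗ[ℝ] ℝ := Ceq.symm.toLinearMap with hΦdef
  have hΦCeq : ∀ φ : Module.Dual ℝ g, Φ (Cfun φ) = φ := by
    intro φ
    have h := Ceq.symm_apply_apply φ
    exact h
  have hCΦ : ∀ b : g, Cfun (Φ b) = b := by
    intro b
    have h := Ceq.apply_symm_apply b
    exact h
  have hΦint : ∀ a b : g, Φ a b = ∫ z in B, (Φ a) z * (Φ b) z ∂μ := by
    intro a b
    have hmulcomm : (fun z => (Φ b) z * (Φ a) z) = fun z => (Φ a) z * (Φ b) z := by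
      funext z; ring
    calc Φ a b = (Φ a) (Cfun (Φ b)) := by rw [hCΦ]
    _ = ∫ z in B, (Φ b) z * (Φ a) z ∂μ := hpair _ _
    _ = ∫ z in B, (Φ a) z * (Φ b) z ∂μ := by rw [hmulcomm]
  have hsymm : ∀ a b : g, Φ a b = Φ b a := by
    intro a b
    rw [hΦint a b, hΦint b a]
    have : (fun z => (Φ a) z * (Φ b) z) = fun z => (Φ b) z * (Φ a) z := by
      funext z; ring
    rw [this]
  have hpos : ∀ a : g, a ≠ 0 → 0 < Φ a a := by
    intro a ha
    rw [hΦint a a]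
    refine hposint (Φ a) ?_
    intro h
    apply ha
    have := congrArg Cfun h
    rw [hCΦ a] at this
    simpa [hCfun] using this
  have hΦinv : ∀ (w : g) (s : ℝ) (a b : g), Φ (T w s a) (T w s b) = Φ a b := by
    intro w s a b
    have h1 : Cfun ((Φ a) ∘ₗ ((T w (-s) : g →L[ℝ] g) : g →ₗ[ℝ] g)) = T w s (Cfun (Φ a)) := by
      have h := hCinvar w (-s) (Φ a)
      rwa [neg_neg] at h
    have h2 : Φ (T w s a) = (Φ a) ∘ₗ ((T w (-s) : g →L[ℝ] g) : g →ₗ[ℝ] g) := by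
      show Ceq.symm (T w s a) = _
      apply (LinearEquiv.symm_apply_eq Ceq).2
      show T w s a = Cfun ((Φ a) ∘ₗ ((T w (-s) : g →L[ℝ] g) : g →ₗ[ℝ] g))
      rw [h1, hCΦ]
    rw [h2]
    show (Φ a) (T w (-s) (T w s b)) = Φ a b
    have h3 : T w (-s) (T w s b) = b := by
      have h := hTinvapp w (-s) b
      rwa [neg_neg] at h
    rw [h3]
  -- skew-symmetry by differentiation
  have hskew : ∀ w a b : g, Φ (br w a) b + Φ a (br w b) = 0 := by
    intro w a b
    set Lc : g →L[ℝ] (g →L[ℝ] ℝ) :=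
      LinearMap.toContinuousLinearMap
        ((LinearMap.toContinuousLinearMap :
            (g →ₗ[ℝ] ℝ) ≃ₗ[ℝ] (g →L[ℝ] ℝ)).toLinearMap ∘ₗ Φ) with hLc
    have hLcapp : ∀ p q : g, Lc p q = Φ p q := fun p q => rfl
    have hca : ∀ s : ℝ, HasDerivAt (fun t : ℝ => T w t a) (A w (T w s a)) s := fun s =>
      expCurve_hasDerivAt (A w) a s
    have hcb : ∀ s : ℝ, HasDerivAt (fun t : ℝ => T w t b) (A w (T w s b)) s := fun s =>
      expCurve_hasDerivAt (A w) b s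
    have hd1 : HasDerivAt (fun t : ℝ => Lc (T w t a)) (Lc (A w (T w 0 a))) 0 :=
      Lc.hasFDerivAt.comp_hasDerivAt 0 (hca 0)
    have hd2 : HasDerivAt (fun t : ℝ => Lc (T w t a) (T w t b))
        (Lc (A w (T w 0 a)) (T w 0 b) + Lc (T w 0 a) (A w (T w 0 b))) 0 :=
      hd1.clm_apply (hcb 0)
    have hconstfun : (fun t : ℝ => Lc (T w t a) (T w t b)) = fun _ : ℝ => Φ a b := by
      funext t
      rw [hLcapp]
      exact hΦinv w t a b
    rw [hconstfun] at hd2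
    have hz : HasDerivAt (fun _ : ℝ => Φ a b) 0 (0:ℝ) := hasDerivAt_const _ _
    have hkey := hd2.unique hz
    have h0a : T w 0 a = a := by rw [hT0]; simp
    have h0b : T w 0 b = b := by rw [hT0]; simp
    rw [h0a, h0b] at hkey
    have hAa : A w a = br w a := rfl
    have hAb : A w b = br w b := rfl
    rw [hAa, hAb, hLcapp, hLcapp] at hkey
    exact hkey
  exact ⟨Φ, hsymm, hpos, hskew, fun ψ => ⟨Cfun ψ, hΦCeq ψ⟩⟩

theorem quad_coeff_zero (a b : ℝ) (h : ∀ t : ℝ, 0 ≤ b * t + a * t ^ 2) : b = 0 := by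
  by_contra hb
  have hd : 0 < |a| + 1 := by positivity
  have h1 := h (-b / (|a| + 1))
  have hb2 : 0 < b ^ 2 := by positivity
  have ha : a - (|a| + 1) ≤ -1 := by
    have := le_abs_self a; linarith
  have hexp : b * (-b / (|a| + 1)) + a * (-b / (|a| + 1)) ^ 2
      = b ^ 2 * (a - (|a| + 1)) / (|a| + 1) ^ 2 := by
    field_simp
    ring
  rw [hexp] at h1
  have hneg : b ^ 2 * (a - (|a| + 1)) / (|a| + 1) ^ 2 < 0 := by
    apply div_neg_of_neg_of_pos
    · nlinarith
    · positivity
  linarith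

/-- The form `S(x,y) = -(n(y-x)/4) · max_{φ ∈ N_{y-x}} φ [x,[x,y-x]]`, the maximum
(here a supremum) running over the unit-dual-norm functionals norming `y - x`. -/
noncomputable def Sform {g : Type*} [AddCommGroup g] [Module ℝ g]
    (br : g →ₗ[ℝ] g →ₗ[ℝ] g) (n : g → ℝ) (x y : g) : ℝ :=
  -(n (y - x) / 4) * sSup {c : ℝ | ∃ φ : g →ₗ[ℝ] ℝ, (∀ w : g, φ w ≤ n w)
    ∧ φ (y - x) = n (y - x) ∧ φ (br x (br x (y - x))) = c}

set_option maxHeartbeats 2000000 in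
/-- if the `Ad`-invariant Finsler norm `n` on the Lie algebra (bracket
`br`) is strictly convex, then `S(x,y) = 0` implies `[x,y] = 0`. -/
theorem flat_implies_commute_of_strictly_convex
    {g : Type*} [NormedAddCommGroup g] [NormedSpace ℝ g] [FiniteDimensional ℝ g]
    (br : g →ₗ[ℝ] g →ₗ[ℝ] g)
    (halt : ∀ a : g, br a a = 0)
    (hjacobi : ∀ a b c : g, br a (br b c) + br b (br c a) + br c (br a b) = 0)
    (n : g → ℝ)
    (hnonneg : ∀ x : g, 0 ≤ n x)
    (hadd : ∀ x y : g, n (x + y) ≤ n x + n y)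
    (hhom : ∀ (c : ℝ) (x : g), 0 ≤ c → n (c • x) = c * n x)
    (hdeg : ∀ x : g, n x = 0 ↔ x = 0)
    (hinv : ∀ (x v : g) (s : ℝ),
      n ((NormedSpace.exp (s • LinearMap.toContinuousLinearMap (br x))) v) = n v)
    (hstrict : ∀ x y : g, x ≠ 0 → y ≠ 0 → n (x + y) = n x + n y →
      ∃ c : ℝ, 0 < c ∧ y = c • x)
    (x y : g)
    (hS : Sform br n x y = 0) :
    br x y = 0 := by
  classical
  rcases eq_or_ne (y - x) 0 with hv0 | hvne0
  · have hxy : y = x := by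
      have := sub_eq_zero.1 hv0
      exact this
    rw [hxy]
    exact halt x
  set v : g := y - x with hvdef
  have hvne : v ≠ 0 := hvne0
  have hN : 0 < n v := lt_of_le_of_ne (hnonneg v) (Ne.symm fun h => hvne ((hdeg v).1 h))
  obtain ⟨C, hC0, hCle⟩ := n_le_const_norm n hnonneg hadd hhom
  have hncont : Continuous n := n_continuous n hC0 hadd hCle
  haveI hnont : Nontrivial g := ⟨⟨v, 0, hvne⟩⟩
  -- antisymmetry of the bracket
  have hanti : ∀ a b : g, br a b = -br b a := by
    intro a b
    have h := halt (a + b)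
    rw [map_add] at h
    simp only [LinearMap.add_apply, map_add, halt a, halt b, zero_add, add_zero] at h
    exact eq_neg_of_add_eq_zero_right h
  -- extract the norming functional with vanishing second variation
  simp only [Sform] at hS
  rw [← hvdef] at hS
  set z₀ : g := br x (br x v) with hz₀def
  have hev : ∀ z : g, Continuous (fun φ : g →L[ℝ] ℝ => φ z) := by
    intro z
    have hl : LipschitzWith (Real.toNNReal ‖z‖) (fun φ : g →L[ℝ] ℝ => φ z) := by
      refine LipschitzWith.of_dist_le_mul fun φ ψ => ?_
      rw [Real.dist_eq, dist_eq_norm, Real.coe_toNNReal _ (norm_nonneg z)]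
      have h1 : φ z - ψ z = (φ - ψ) z := by simp
      rw [← Real.norm_eq_abs, h1]
      calc ‖(φ - ψ) z‖ ≤ ‖φ - ψ‖ * ‖z‖ := (φ - ψ).le_opNorm z
      _ = ‖z‖ * ‖φ - ψ‖ := by ring
    exact hl.continuous
  set K : Set (g →L[ℝ] ℝ) := {φ | (∀ w : g, φ w ≤ n w) ∧ φ v = n v} with hKdef
  have hKne : K.Nonempty := by
    obtain ⟨φ, hφext, hφle⟩ := exists_extension_of_le_sublinear
      (LinearPMap.mkSpanSingleton (K := ℝ) v (n v) hvne) n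
      (fun c hc z => hhom c z hc.le) hadd (by
        rintro ⟨z, hz⟩
        obtain ⟨c, hc⟩ := Submodule.mem_span_singleton.1 hz
        induction hc
        rw [LinearPMap.mkSpanSingleton'_apply]
        rcases le_or_gt 0 c with h | h
        · rw [hhom c v h, smul_eq_mul]
          exact le_rfl
        · have h1 : c • n v ≤ 0 := by
            rw [smul_eq_mul]
            nlinarith [hnonneg v]
          exact le_trans h1 (hnonneg _))
    have hmem : v ∈ (LinearPMap.mkSpanSingleton (K := ℝ) (σ := RingHom.id ℝ) v (n v) hvne).domain := by
      rw [LinearPMap.domain_mkSpanSingleton]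
      exact Submodule.mem_span_singleton_self v
    have hveq : (LinearMap.toContinuousLinearMap φ) v = n v := by
      have h1 := hφext ⟨v, hmem⟩
      have h2 := LinearPMap.mkSpanSingleton_apply ℝ ℝ (σ := RingHom.id ℝ) hvne (n v)
      exact h1.trans h2
    exact ⟨LinearMap.toContinuousLinearMap φ, ⟨fun w => hφle w, hveq⟩⟩
  have hKclosed : IsClosed K := by
    have h1 : IsClosed {φ : g →L[ℝ] ℝ | ∀ w : g, φ w ≤ n w} := by
      have heq : {φ : g →L[ℝ] ℝ | ∀ w : g, φ w ≤ n w}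
          = ⋂ w : g, {φ : g →L[ℝ] ℝ | φ w ≤ n w} := by
        ext φ; simp
      rw [heq]
      exact isClosed_iInter fun w => isClosed_le (hev w) continuous_const
    exact h1.inter (isClosed_eq (hev v) continuous_const)
  have hKsub : K ⊆ Metric.closedBall 0 C := by
    intro φ hφ
    rw [Metric.mem_closedBall, dist_zero_right]
    refine ContinuousLinearMap.opNorm_le_bound φ hC0 fun w => ?_
    rw [Real.norm_eq_abs, abs_le]
    constructor
    · have h1 := hφ.1 (-w)
      have h2 := hCle (-w)
      rw [norm_neg] at h2
      have h3 : φ (-w) = -φ w := by simp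
      rw [h3] at h1
      linarith
    · linarith [hφ.1 w, hCle w]
  have hKcpt : IsCompact K := (isCompact_closedBall 0 C).of_isClosed_subset hKclosed hKsub
  set Sset : Set ℝ := {c : ℝ | ∃ φ : g →ₗ[ℝ] ℝ, (∀ w : g, φ w ≤ n w)
    ∧ φ v = n v ∧ φ z₀ = c} with hSsetdef
  have hSim : Sset = (fun φ : g →L[ℝ] ℝ => φ z₀) '' K := by
    ext c
    constructor
    · rintro ⟨φ, h1, h2, h3⟩
      exact ⟨LinearMap.toContinuousLinearMap φ, ⟨fun w => h1 w, h2⟩, h3⟩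
    · rintro ⟨φ, ⟨h1, h2⟩, h3⟩
      exact ⟨(φ : g →ₗ[ℝ] ℝ), h1, h2, h3⟩
  have hSsetcpt : IsCompact Sset := by rw [hSim]; exact hKcpt.image (hev z₀)
  have hSsetne : Sset.Nonempty := by rw [hSim]; exact hKne.image _
  have hsup0 : sSup Sset = 0 := by
    rcases mul_eq_zero.1 hS with h | h
    · exfalso
      have h1 : n v / 4 = 0 := neg_eq_zero.1 h
      linarith
    · exact h
  have hmem0 : (0 : ℝ) ∈ Sset := by
    rw [← hsup0]
    exact hSsetcpt.sSup_mem hSsetne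
  obtain ⟨φ₀, hφle, hφv, hφz₀⟩ := hmem0
  -- the invariant inner product
  obtain ⟨Φ, hsymm, hpos, hskew, hsurjΦ⟩ := exists_invariant_form br n hnonneg hadd hhom hdeg
    hinv ⟨C, hC0, hCle⟩ hncont
  obtain ⟨u, huΦ⟩ := hsurjΦ φ₀
  -- one-parameter subgroups again
  set Aop : g → (g →L[ℝ] g) := fun w => LinearMap.toContinuousLinearMap (br w) with hAopdef
  set T : g → ℝ → (g →L[ℝ] g) := fun w s => NormedSpace.exp (s • Aop w) with hTdef
  have hT0app : ∀ w z : g, T w 0 z = z := by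
    intro w z
    have h : T w 0 = 1 := by simp [hTdef, NormedSpace.exp_zero]
    rw [h]
    rfl
  have hTn : ∀ (w : g) (s : ℝ) (z : g), n (T w s z) = n z := fun w s z => hinv w z s
  have hcurve : ∀ (w z : g) (s : ℝ), HasDerivAt (fun t : ℝ => T w t z) (Aop w (T w s z)) s :=
    fun w z s => expCurve_hasDerivAt (Aop w) z s
  have hfd1 : ∀ (φ : g →ₗ[ℝ] ℝ) (w z : g) (s : ℝ),
      HasDerivAt (fun t : ℝ => φ (T w t z)) (φ (Aop w (T w s z))) s := fun φ w z s =>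
    (LinearMap.toContinuousLinearMap φ).hasFDerivAt.comp_hasDerivAt s (hcurve w z s)
  have hmax0 : ∀ (w : g) (s : ℝ), φ₀ (T w s v) ≤ φ₀ (T w 0 v) := by
    intro w s
    rw [hT0app]
    calc φ₀ (T w s v) ≤ n (T w s v) := hφle _
    _ = n v := hTn w s v
    _ = φ₀ v := hφv.symm
  -- first order condition
  have hfirst : ∀ w : g, φ₀ (br w v) = 0 := by
    intro w
    have hloc : IsLocalMax (fun t : ℝ => φ₀ (T w t v)) 0 :=
      Filter.Eventually.of_forall fun s => hmax0 w s
    have h := hloc.hasDerivAt_eq_zero (hfd1 φ₀ w v 0)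
    rw [hT0app w v] at h
    exact h
  -- second order condition
  have hsecond : ∀ w : g, φ₀ (br w (br w v)) ≤ 0 := by
    intro w
    have hcc : Continuous (fun s : ℝ => T w s v) :=
      continuous_iff_continuousAt.2 fun s => (hcurve w v s).continuousAt
    have hcont2 : Continuous (fun s : ℝ => φ₀ (Aop w (Aop w (T w s v)))) :=
      (LinearMap.toContinuousLinearMap φ₀).continuous.comp
        ((Aop w).continuous.comp ((Aop w).continuous.comp hcc))
    have hfd2 : ∀ s : ℝ, HasDerivAt (fun t : ℝ => φ₀ (Aop w (T w t v)))
        (φ₀ (Aop w (Aop w (T w s v)))) s := fun s =>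
      ((LinearMap.toContinuousLinearMap φ₀).comp (Aop w)).hasFDerivAt.comp_hasDerivAt s
        (hcurve w v s)
    have h := second_deriv_test (hfd1 φ₀ w v) hfd2 hcont2.continuousAt
      (fun s => hmax0 w s)
    rw [hT0app w v] at h
    exact h
  -- kernel inclusion via strict convexity
  have hker : ∀ w : g, br u w = 0 → br v w = 0 := by
    intro w hw
    have hφbr : ∀ z : g, φ₀ (br w z) = 0 := by
      intro z
      have h1 := hskew w u z
      have h2 : br w u = 0 := by rw [hanti w u, hw, neg_zero]
      rw [h2] at h1
      have h3 : Φ (0 : g) z = 0 := by simp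
      rw [h3] at h1
      have h4 : Φ u (br w z) = 0 := by linarith
      rw [huΦ] at h4
      exact h4
    have hconst : ∀ s : ℝ, φ₀ (T w s v) = n v := by
      intro s
      have hdiff : Differentiable ℝ (fun t : ℝ => φ₀ (T w t v)) := fun t =>
        (hfd1 φ₀ w v t).differentiableAt
      have hderiv0 : ∀ t : ℝ, deriv (fun t : ℝ => φ₀ (T w t v)) t = 0 := by
        intro t
        rw [(hfd1 φ₀ w v t).deriv]
        exact hφbr _
      have hconst' := is_const_of_deriv_eq_zero hdiff hderiv0 s 0
      rw [hconst']
      show φ₀ (T w 0 v) = n v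
      rw [hT0app w v, hφv]
    have hTv : ∀ s : ℝ, T w s v = v := by
      intro s
      have hnzs : n (T w s v) = n v := hTn w s v
      have hzsne : T w s v ≠ 0 := by
        intro h
        rw [h, n_zero' n hhom] at hnzs
        exact (ne_of_gt hN) hnzs.symm
      have hsum : n (v + T w s v) = n v + n (T w s v) := by
        refine le_antisymm (hadd v _) ?_
        have h1 : φ₀ (v + T w s v) ≤ n (v + T w s v) := hφle _
        rw [map_add, hφv, hconst s] at h1
        rw [hnzs]
        linarith
      obtain ⟨c, hcpos, hceq⟩ := hstrict v (T w s v) hvne hzsne hsum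
      have hnc : n (T w s v) = c * n v := by rw [hceq, hhom c v hcpos.le]
      rw [hnzs] at hnc
      have hc1 : c = 1 := by nlinarith
      rw [hc1, one_smul] at hceq
      exact hceq
    have hd := hcurve w v 0
    have hconstfun : (fun t : ℝ => T w t v) = fun _ : ℝ => v := funext fun t => hTv t
    rw [hconstfun] at hd
    have h0 := hd.unique (hasDerivAt_const _ _)
    rw [hT0app w v] at h0
    have hwv : br w v = 0 := h0
    rw [hanti v w, hwv, neg_zero]
  -- [u, v] = 0
  have huv : br u v = 0 := by
    have hall : ∀ w : g, Φ w (br u v) = 0 := by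
      intro w
      have h1 := hskew u w v
      have h2 := hskew w u v
      have h4 : Φ u (br w v) = 0 := by rw [huΦ]; exact hfirst w
      have h5 : Φ (br w u) v = 0 := by linarith
      have h7 : Φ (br u w) v = 0 := by
        rw [hanti u w, map_neg, LinearMap.neg_apply, h5, neg_zero]
      linarith
    by_contra hne
    exact (ne_of_gt (hpos _ hne)) (hall _)
  -- ad_u and ad_v commute
  have hcomm : ∀ z : g, br u (br v z) = br v (br u z) := by
    intro z
    have h := hjacobi u v z
    rw [huv, map_zero, add_zero] at h
    have h2 : br z u = -br u z := hanti z u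
    rw [h2, map_neg] at h
    have h3 : br u (br v z) - br v (br u z) = 0 := by
      have h4 := h
      abel_nf at h4 ⊢
      exact h4
    have := sub_eq_zero.1 h3
    exact this
  -- positivity of the mixed form
  have hq : ∀ w : g, 0 ≤ Φ (br u w) (br v w) := by
    intro w
    have h1 : φ₀ (br w (br w v)) ≤ 0 := hsecond w
    have h2 := hskew w u (br w v)
    have h3 : Φ u (br w (br w v)) = φ₀ (br w (br w v)) := by rw [huΦ]
    have h4 : Φ (br w u) (br w v) = Φ (br u w) (br v w) := by
      rw [hanti w u, hanti w v]
      simp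
    linarith
  have hqx : Φ (br u x) (br v x) = 0 := by
    have h2 := hskew x u (br x v)
    have h3 : Φ u (br x (br x v)) = 0 := by rw [huΦ]; exact hφz₀
    have h4 : Φ (br x u) (br x v) = Φ (br u x) (br v x) := by
      rw [hanti x u, hanti x v]
      simp
    linarith
  -- polarization
  have hpol : ∀ w : g, Φ (br u w) (br v x) + Φ (br u x) (br v w) = 0 := by
    intro w
    refine quad_coeff_zero (Φ (br u w) (br v w)) _ fun t => ?_
    have h := hq (x + t • w)
    have hexp : Φ (br u (x + t • w)) (br v (x + t • w))
        = Φ (br u x) (br v x) + (Φ (br u w) (br v x) + Φ (br u x) (br v w)) * t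
          + Φ (br u w) (br v w) * t ^ 2 := by
      simp only [map_add, map_smul, LinearMap.add_apply, LinearMap.smul_apply, smul_eq_mul]
      ring
    rw [hexp, hqx] at h
    linarith
  -- conclude ad_u (ad_v x) = 0
  have hSTx : br u (br v x) = 0 := by
    have hall : ∀ w : g, Φ w (br u (br v x)) = 0 := by
      intro w
      have h1 := hpol w
      have h2 := hskew u w (br v x)
      have h3 := hskew v w (br u x)
      have h4 : Φ (br u x) (br v w) = Φ (br v w) (br u x) := hsymm _ _
      have h5 : Φ w (br v (br u x)) = Φ w (br u (br v x)) := by rw [← hcomm x]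
      linarith
    by_contra hne
    exact (ne_of_gt (hpos _ hne)) (hall _)
  have hT2x : br v (br v x) = 0 := hker (br v x) hSTx
  have hTx : br v x = 0 := by
    have h1 := hskew v x (br v x)
    rw [hT2x] at h1
    have h2 : Φ x (0 : g) = 0 := by simp
    rw [h2] at h1
    by_contra hne
    have := hpos _ hne
    linarith
  have hy : y = v + x := by rw [hvdef]; abel
  calc br x y = br x v + br x x := by rw [hy, map_add]
  _ = br x v := by rw [halt x, add_zero]
  _ = -br v x := hanti x v
  _ = 0 := by rw [hTx, neg_zero]
end
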